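/- arXiv:0810.2309 — 5 statements merged into one kernel-verified Lean document; each statement's English description precedes it below -/
import Mathlib

section
/- Let (σ_n) be a sequence of positive reals and α ∈ (0,1) with ∑_{n=1}^∞ σ_n^{-α} < ∞. Set β := μα/(1-α) for a fixed real μ ≥ 1. Then there exist positive sequences (α_n), (γ_n), (δ_n) such that α_n → ∞, ∑_n γ_n^{-β} < 1/(16·D·μ) for any prescribed constant D ≥ 1, ∑_n δ_n < 1/2, and σ_n ≥ α_n² · γ_n^{μ} / δ_n for all n. -/
open Filter ENNReal
open Topology

/-- Auxiliary: from a summable positive series, dividing by the square root of the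
tails keeps the series summable. -/
lemma aux_tail_summable (x : ℕ → ℝ) (hx : ∀ n, 0 < x n) (hs : Summable x) :
    Summable (fun n => x n * (Real.sqrt (∑' k, x (k + n)))⁻¹) := by
  set t : ℕ → ℝ := fun n => ∑' k, x (k + n) with ht
  have hts : ∀ n, Summable (fun k => x (k + n)) := fun n => (summable_nat_add_iff n).2 hs
  have htpos : ∀ n, 0 < t n := by
    intro n
    have := Summable.le_tsum (hts n) 0 (fun j _ => (hx _).le)
    simpa using lt_of_lt_of_le (hx n) (by simpa using this)
  have hrec : ∀ n, t n = x n + t (n + 1) := by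
    intro n
    have := Summable.tsum_eq_zero_add (hts n)
    simp only [zero_add] at this
    rw [ht]
    simp only []
    rw [this]
    congr 1
    apply tsum_congr
    intro k
    congr 1
    ring
  have hmono : ∀ n, t (n + 1) ≤ t n := fun n => by
    have := hrec n; nlinarith [hx n]
  have hbound : ∀ n, x n * (Real.sqrt (t n))⁻¹ ≤
      2 * (Real.sqrt (t n) - Real.sqrt (t (n + 1))) := by
    intro n
    set A := Real.sqrt (t n) with hA
    set B := Real.sqrt (t (n + 1)) with hB
    have hA0 : 0 < A := Real.sqrt_pos.2 (htpos n)
    have hB0 : 0 ≤ B := Real.sqrt_nonneg _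
    have hBA : B ≤ A := Real.sqrt_le_sqrt (hmono n)
    have hA2 : A ^ 2 = t n := Real.sq_sqrt (htpos n).le
    have hB2 : B ^ 2 = t (n + 1) := Real.sq_sqrt (htpos (n + 1)).le
    have hxn : x n = A ^ 2 - B ^ 2 := by rw [hA2, hB2]; have := hrec n; linarith
    rw [mul_inv_le_iff₀ hA0, hxn]
    nlinarith [sq_nonneg (A - B)]
  apply summable_of_sum_range_le (c := 2 * Real.sqrt (t 0))
  · intro n
    exact mul_nonneg (hx n).le (inv_nonneg.2 (Real.sqrt_nonneg _))
  · intro n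
    calc ∑ i ∈ Finset.range n, x i * (Real.sqrt (t i))⁻¹
        ≤ ∑ i ∈ Finset.range n, 2 * (Real.sqrt (t i) - Real.sqrt (t (i + 1))) :=
          Finset.sum_le_sum fun i _ => hbound i
      _ = 2 * (Real.sqrt (t 0) - Real.sqrt (t n)) := by
          rw [← Finset.mul_sum, Finset.sum_range_sub' (fun i => Real.sqrt (t i))]
      _ ≤ 2 * Real.sqrt (t 0) := by
          have := Real.sqrt_nonneg (t n); linarith

/-- Lemma 2.2: construction of technical sequences from summability. -/
theorem stmt_0 (σ : ℕ → ℝ) (hσ : ∀ n, 0 < σ n) (α : ℝ) (hα0 : 0 < α) (hα1 : α < 1)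
    (hsum : Summable (fun n => σ n ^ (-α))) (μ : ℝ) (hμ : 1 ≤ μ)
    (β : ℝ) (hβ : β = μ * α / (1 - α)) (D : ℝ) (hD : 1 ≤ D) :
    ∃ a g d : ℕ → ℝ, (∀ n, 0 < a n) ∧ (∀ n, 0 < g n) ∧ (∀ n, 0 < d n) ∧
      Tendsto a atTop atTop ∧
      (∑' n, ENNReal.ofReal (g n ^ (-β))) < ENNReal.ofReal (1 / (16 * D * μ)) ∧
      (∑' n, ENNReal.ofReal (d n)) < ENNReal.ofReal (1 / 2) ∧
      ∀ n, σ n ≥ a n ^ 2 * g n ^ μ / d n := by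
  have hμ0 : (0:ℝ) < μ := lt_of_lt_of_le one_pos hμ
  have hD0 : (0:ℝ) < D := lt_of_lt_of_le one_pos hD
  have h1α : (0:ℝ) < 1 - α := by linarith
  have hβ0 : 0 < β := by rw [hβ]; positivity
  set x : ℕ → ℝ := fun n => σ n ^ (-α) with hxdef
  have hx : ∀ n, 0 < x n := fun n => Real.rpow_pos_of_pos (hσ n) _
  set t : ℕ → ℝ := fun n => ∑' k, x (k + n) with htdef
  have hts : ∀ n, Summable (fun k => x (k + n)) := fun n => (summable_nat_add_iff n).2 hsum
  have htpos : ∀ n, 0 < t n := by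
    intro n
    have := Summable.le_tsum (hts n) 0 (fun j _ => (hx _).le)
    exact lt_of_lt_of_le (hx n) (by simpa using this)
  set w : ℕ → ℝ := fun n => (Real.sqrt (t n))⁻¹ with hwdef
  have hw : ∀ n, 0 < w n := fun n => inv_pos.2 (Real.sqrt_pos.2 (htpos n))
  have hsumT : Summable (fun n => x n * w n) := aux_tail_summable x hx hsum
  set S : ℝ := ∑' n, x n with hSdef
  have hS0 : 0 ≤ S := tsum_nonneg fun n => (hx n).le
  set T : ℝ := ∑' n, x n * w n with hTdef
  have hT0 : 0 ≤ T := tsum_nonneg fun n => (mul_nonneg (hx n).le (hw n).le)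
  set P : ℝ := 16 * D * μ with hPdef
  have hP0 : 0 < P := by positivity
  set K : ℝ := (P * (S + 1)) ^ (β⁻¹ : ℝ) with hKdef
  have hbase : 0 < P * (S + 1) := by positivity
  have hK0 : 0 < K := Real.rpow_pos_of_pos hbase _
  have hKβ : K ^ (-β) = (P * (S + 1))⁻¹ := by
    rw [hKdef, ← Real.rpow_mul hbase.le]
    rw [show β⁻¹ * (-β) = -1 by field_simp]
    exact Real.rpow_neg_one _
  have hKμ0 : 0 < K ^ μ := Real.rpow_pos_of_pos hK0 _
  set c : ℝ := Real.sqrt ((2 * K ^ μ * (T + 1))⁻¹) with hcdef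
  have hc0 : 0 < c := Real.sqrt_pos.2 (by positivity)
  have hc2 : c ^ 2 = (2 * K ^ μ * (T + 1))⁻¹ := Real.sq_sqrt (by positivity)
  refine ⟨fun n => c * ((t n)⁻¹) ^ (4⁻¹ : ℝ),
          fun n => K * σ n ^ ((1 - α) / μ),
          fun n => c ^ 2 * w n * K ^ μ * x n, ?_, ?_, ?_, ?_, ?_, ?_, ?_⟩
  · intro n
    exact mul_pos hc0 (Real.rpow_pos_of_pos (inv_pos.2 (htpos n)) _)
  · intro n
    exact mul_pos hK0 (Real.rpow_pos_of_pos (hσ n) _)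
  · intro n
    exact mul_pos (mul_pos (mul_pos (pow_pos hc0 2) (hw n)) hKμ0) (hx n)
  · -- Tendsto
    have ht0 : Tendsto t atTop (𝓝 0) := tendsto_sum_nat_add x
    have htIoi : Tendsto t atTop (𝓝[>] 0) :=
      tendsto_nhdsWithin_of_tendsto_nhds_of_eventually_within _ ht0
        (Eventually.of_forall fun n => htpos n)
    have hinv : Tendsto (fun n => (t n)⁻¹) atTop atTop := htIoi.inv_tendsto_nhdsGT_zero
    have hr : Tendsto (fun n => ((t n)⁻¹) ^ (4⁻¹ : ℝ)) atTop atTop :=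
      (tendsto_rpow_atTop (by norm_num : (0:ℝ) < 4⁻¹)).comp hinv
    exact hr.const_mul_atTop hc0
  · -- gamma sum
    have hg : ∀ n, (K * σ n ^ ((1 - α) / μ)) ^ (-β) = K ^ (-β) * x n := by
      intro n
      rw [Real.mul_rpow hK0.le (Real.rpow_pos_of_pos (hσ n) _).le,
        ← Real.rpow_mul (hσ n).le]
      congr 2
      rw [hβ]; field_simp
    have hsK : Summable (fun n => K ^ (-β) * x n) := hsum.mul_left _
    calc (∑' n, ENNReal.ofReal ((K * σ n ^ ((1 - α) / μ)) ^ (-β)))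
        = ENNReal.ofReal (∑' n, K ^ (-β) * x n) := by
          rw [ENNReal.ofReal_tsum_of_nonneg (fun n => mul_nonneg
            (Real.rpow_pos_of_pos hK0 _).le (hx n).le) hsK]
          exact tsum_congr fun n => by rw [hg n]
      _ < ENNReal.ofReal (1 / (16 * D * μ)) := by
          rw [ENNReal.ofReal_lt_ofReal_iff (by positivity)]
          rw [tsum_mul_left, hKβ, ← hSdef, mul_comm, ← div_eq_mul_inv, ← hPdef,
            div_lt_div_iff₀ (by positivity) (by positivity)]
          nlinarith
  · -- delta sum
    have hd : ∀ n, c ^ 2 * w n * K ^ μ * x n = (c ^ 2 * K ^ μ) * (x n * w n) := by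
      intro n; ring
    have hsd : Summable (fun n => (c ^ 2 * K ^ μ) * (x n * w n)) := hsumT.mul_left _
    calc (∑' n, ENNReal.ofReal (c ^ 2 * w n * K ^ μ * x n))
        = ENNReal.ofReal (∑' n, (c ^ 2 * K ^ μ) * (x n * w n)) := by
          rw [ENNReal.ofReal_tsum_of_nonneg (fun n => mul_nonneg
            (mul_nonneg (pow_pos hc0 2).le hKμ0.le)
            (mul_nonneg (hx n).le (hw n).le)) hsd]
          exact tsum_congr fun n => by rw [hd n]
      _ < ENNReal.ofReal (1 / 2) := by
          rw [ENNReal.ofReal_lt_ofReal_iff (by norm_num)]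
          rw [tsum_mul_left, ← hTdef, hc2]
          have ha : (0:ℝ) < 2 * K ^ μ * (T + 1) := by positivity
          calc (2 * K ^ μ * (T + 1))⁻¹ * (K ^ μ) * T
              = (K ^ μ * T) / (2 * K ^ μ * (T + 1)) := by
                rw [div_eq_mul_inv]; ring
            _ < 1 / 2 := by rw [div_lt_iff₀ ha]; nlinarith
  · -- main inequality
    intro n
    have ha2 : (c * ((t n)⁻¹) ^ (4⁻¹ : ℝ)) ^ 2 = c ^ 2 * w n := by
      rw [mul_pow]
      congr 1
      show ((t n)⁻¹ ^ (4⁻¹ : ℝ)) ^ 2 = (Real.sqrt (t n))⁻¹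
      rw [← Real.rpow_natCast (((t n)⁻¹) ^ (4⁻¹ : ℝ)) 2,
        ← Real.rpow_mul (inv_pos.2 (htpos n)).le,
        show ((4⁻¹ : ℝ) * ((2:ℕ):ℝ)) = (1/2 : ℝ) by norm_num,
        ← Real.sqrt_eq_rpow, Real.sqrt_inv]
    have hgμ : (K * σ n ^ ((1 - α) / μ)) ^ μ = K ^ μ * σ n ^ (1 - α) := by
      rw [Real.mul_rpow hK0.le (Real.rpow_pos_of_pos (hσ n) _).le,
        ← Real.rpow_mul (hσ n).le, div_mul_cancel₀ _ hμ0.ne']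
    have hσx : σ n * x n = σ n ^ (1 - α) := by
      rw [hxdef]
      nth_rewrite 1 [← Real.rpow_one (σ n)]
      rw [← Real.rpow_add (hσ n)]
      ring_nf
    have hdpos : 0 < c ^ 2 * w n * K ^ μ * x n :=
      mul_pos (mul_pos (mul_pos (pow_pos hc0 2) (hw n)) hKμ0) (hx n)
    rw [ge_iff_le, div_le_iff₀ hdpos, ha2, hgμ, ← hσx]
    exact le_of_eq (by ring)
end

section
/- Let ν and η be Borel probability measures on a compact set J ⊂ ℂ, q > 0, C ≥ 1, and suppose that for ν-almost every z there are radii r_j(z) → 0 with both ν(B(z,r_j)) and η(B(z,r_j)) comparable to r_j^q up to the factor C. Then η(E) ≥ c·ν(E) for every open set E ⊂ ℂ, where c > 0 depends only on C and the Besicovitch covering constant. Consequently ν and η are not mutually singular unless ν = 0. -/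
open MeasureTheory Metric Filter
open scoped ENNReal Topology

/-! At `ν`-a.e. point the two-sided bounds give, along radii tending to `0`,
`ν(B) ≤ C rᵠ < 2 C² η(B)`, so `c ν(B) < η(B)` for `c = (2C²)⁻¹`. Shrinking the open balls slightly
to closed ones, the Besicovitch differentiation theorem turns these frequent ball inequalities
into `c ν(s) ≤ η(s)` for every set `s`; in particular `ν ≪ η`, which is incompatible with
`ν ⟂ η` unless `ν = 0`. -/

theorem exists_lt_measure_closedBall_of_lt_measure_ball {α : Type*} [PseudoMetricSpace α]
    [MeasurableSpace α] (μ : Measure α) {x : α} {r : ℝ} {a : ℝ≥0∞} (h : a < μ (ball x r)) :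
    ∃ u ∈ Set.Ioo 0 r, a < μ (closedBall x u) := by
  have hr : 0 < r := by
    by_contra! hr
    simp [ball_eq_empty.2 hr] at h
  obtain ⟨u, hu_mono, hu_mem, hu_lim⟩ := exists_seq_strictMono_tendsto' hr
  have hball : ⋃ n, closedBall x (u n) = ball x r := by
    refine Set.Subset.antisymm
      (Set.iUnion_subset fun n => closedBall_subset_ball (hu_mem n).2) fun y hy => ?_
    obtain ⟨n, hn⟩ := (hu_lim.eventually (lt_mem_nhds (mem_ball.1 hy))).exists
    exact Set.mem_iUnion.2 ⟨n, mem_closedBall.2 hn.le⟩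
  have hlim := tendsto_measure_iUnion_atTop (μ := μ)
    fun m n hmn => closedBall_subset_closedBall (hu_mono.monotone hmn) (x := x)
  rw [hball] at hlim
  obtain ⟨n, hn⟩ := (hlim.eventually (eventually_gt_nhds h)).exists
  exact ⟨u n, hu_mem n, hn⟩

theorem frequently_lt_measure_closedBall_of_frequently_lt_measure_ball {α : Type*}
    [PseudoMetricSpace α] [MeasurableSpace α] {μ ν : Measure α} {c : ℝ≥0∞} {x : α}
    (h : ∃ᶠ r in 𝓝[>] 0, c * μ (ball x r) < ν (ball x r)) :
    ∃ᶠ r in 𝓝[>] 0, c * μ (closedBall x r) < ν (closedBall x r) := by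
  rw [(nhdsGT_basis (0 : ℝ)).frequently_iff] at h ⊢
  intro ε hε
  obtain ⟨r, hr, hlt⟩ := h ε hε
  obtain ⟨u, hu, hlt'⟩ := exists_lt_measure_closedBall_of_lt_measure_ball ν hlt
  refine ⟨u, ⟨hu.1, hu.2.trans hr.2⟩, lt_of_le_of_lt ?_ hlt'⟩
  gcongr
  exact closedBall_subset_ball hu.2

section Besicovitch

variable {α : Type*} [MetricSpace α] [MeasurableSpace α] [BorelSpace α]
  [SecondCountableTopology α] [HasBesicovitchCovering α]

theorem mul_measure_le_of_ae_frequently_lt_measure_ball (μ ν : Measure α)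
    [IsLocallyFiniteMeasure μ] [IsLocallyFiniteMeasure ν] {c : ℝ≥0∞}
    (h : ∀ᵐ x ∂μ, ∃ᶠ r in 𝓝[>] 0, c * μ (ball x r) < ν (ball x r)) (s : Set α) :
    c * μ s ≤ ν s := by
  set A := {x | ∃ᶠ r in 𝓝[>] 0, c * μ (ball x r) < ν (ball x r)}
  have hA : ∀ x ∈ s ∩ A, ∃ᶠ a in (Besicovitch.vitaliFamily μ).filterAt x, (c • μ) a ≤ ν a :=
    fun x hx => ((Besicovitch.tendsto_filterAt μ x).frequently
      (frequently_lt_measure_closedBall_of_frequently_lt_measure_ball hx.2)).mono fun _ => le_of_lt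
  calc c * μ s = (c • μ) (s ∩ A) := by rw [Measure.smul_apply, measure_inter_conull h, smul_eq_mul]
    _ ≤ ν (s ∩ A) := (Besicovitch.vitaliFamily μ).measure_le_of_frequently_le ν
        (Measure.AbsolutelyContinuous.rfl.smul_left c) _ hA
    _ ≤ ν s := measure_mono Set.inter_subset_left

end Besicovitch

theorem Measure.not_mutuallySingular_of_smul_le {α : Type*} [MeasurableSpace α]
    {μ ν : Measure α} {c : ℝ≥0∞} (hc : c ≠ 0) (hμ : μ ≠ 0) (h : c • μ ≤ ν) : ¬ μ ⟂ₘ ν := by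
  intro hμν
  have hcμ : c • μ ⟂ₘ c • μ :=
    (hμν.smul c).mono_ac Measure.AbsolutelyContinuous.rfl (Measure.absolutelyContinuous_of_le h)
  rcases Measure.ennreal_smul_eq_zero.1 ((Measure.MutuallySingular.self_iff _).1 hcμ) with hc' | hμ'
  exacts [hc hc', hμ hμ']

theorem ofReal_inv_two_mul_sq_mul_lt {C t : ℝ} (hC : 0 < C) (ht : 0 < t) {a b : ℝ≥0∞}
    (ha : a ≤ ENNReal.ofReal (C * t)) (hb : ENNReal.ofReal (C⁻¹ * t) ≤ b) :
    ENNReal.ofReal (2 * C ^ 2)⁻¹ * a < b :=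
  calc ENNReal.ofReal (2 * C ^ 2)⁻¹ * a
      ≤ ENNReal.ofReal (2 * C ^ 2)⁻¹ * ENNReal.ofReal (C * t) := by gcongr
    _ = ENNReal.ofReal (C⁻¹ * t / 2) := by
        rw [← ENNReal.ofReal_mul (by positivity)]
        congr 1
        field_simp
    _ < ENNReal.ofReal (C⁻¹ * t) :=
        (ENNReal.ofReal_lt_ofReal_iff (by positivity)).2 (half_lt_self (by positivity))
    _ ≤ b := hb

theorem stmt_7_general (J : Set ℂ)
    (ν η : Measure ℂ) [IsProbabilityMeasure ν] [IsProbabilityMeasure η]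
    (hνJ : ν Jᶜ = 0)
    (q C : ℝ) (hC : 1 ≤ C)
    (h : ∀ᵐ z ∂ν, z ∈ J → ∃ r : ℕ → ℝ, (∀ j, 0 < r j) ∧ Tendsto r atTop (𝓝 0) ∧
      ∀ j, (ENNReal.ofReal (C⁻¹ * r j ^ q) ≤ ν (ball z (r j)) ∧
              ν (ball z (r j)) ≤ ENNReal.ofReal (C * r j ^ q)) ∧
           (ENNReal.ofReal (C⁻¹ * r j ^ q) ≤ η (ball z (r j)) ∧
              η (ball z (r j)) ≤ ENNReal.ofReal (C * r j ^ q))) :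
    (∃ c : ℝ, 0 < c ∧ ∀ E : Set ℂ, IsOpen E → ENNReal.ofReal c * ν E ≤ η E) ∧
      ¬ ν.MutuallySingular η := by
  have hC₀ : 0 < C := by linarith
  have hfreq : ∀ᵐ z ∂ν, ∃ᶠ r in 𝓝[>] 0,
      ENNReal.ofReal (2 * C ^ 2)⁻¹ * ν (ball z r) < η (ball z r) := by
    filter_upwards [h, ae_iff.2 hνJ] with z hz hzJ
    obtain ⟨r, hr_pos, hr_lim, hr_bounds⟩ := hz hzJ
    exact (tendsto_nhdsWithin_iff.2 ⟨hr_lim, .of_forall hr_pos⟩).frequently (.of_forall fun j =>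
      ofReal_inv_two_mul_sq_mul_lt hC₀ (Real.rpow_pos_of_pos (hr_pos j) q)
        (hr_bounds j).1.2 (hr_bounds j).2.1)
  have hle := mul_measure_le_of_ae_frequently_lt_measure_ball ν η hfreq
  refine ⟨⟨(2 * C ^ 2)⁻¹, by positivity, fun E _ => hle E⟩, ?_⟩
  exact Measure.not_mutuallySingular_of_smul_le (ENNReal.ofReal_pos.2 (by positivity)).ne'
    (IsProbabilityMeasure.ne_zero ν) (Measure.le_iff'.2 hle)

/-- Second step of Lemma 5.2: if at `ν`-a.e. point both measures are comparable to `r^q`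
along radii tending to `0`, then `η(E) ≥ c ν(E)` for every open `E`; consequently `ν` and
`η` are not mutually singular. -/
theorem stmt_7 (J : Set ℂ) (hJ : IsCompact J)
    (ν η : Measure ℂ) [IsProbabilityMeasure ν] [IsProbabilityMeasure η]
    (hνJ : ν Jᶜ = 0) (hηJ : η Jᶜ = 0)
    (q C : ℝ) (hq : 0 < q) (hC : 1 ≤ C)
    (h : ∀ᵐ z ∂ν, z ∈ J → ∃ r : ℕ → ℝ, (∀ j, 0 < r j) ∧ Tendsto r atTop (𝓝 0) ∧
      ∀ j, (ENNReal.ofReal (C⁻¹ * r j ^ q) ≤ ν (ball z (r j)) ∧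
              ν (ball z (r j)) ≤ ENNReal.ofReal (C * r j ^ q)) ∧
           (ENNReal.ofReal (C⁻¹ * r j ^ q) ≤ η (ball z (r j)) ∧
              η (ball z (r j)) ≤ ENNReal.ofReal (C * r j ^ q))) :
    (∃ c : ℝ, 0 < c ∧ ∀ E : Set ℂ, IsOpen E → ENNReal.ofReal c * ν E ≤ η E) ∧
      ¬ ν.MutuallySingular η :=
  stmt_7_general J ν η hνJ q C hC h
end

section
/- Let F be holomorphic on a neighborhood of a point z with F^k(z) = z, and suppose there exist ρ > 0 and a branch G of F^{-k} fixing z, defined on B(z, ρ), such that some iterate G^n maps B(z, ρ) into B(z, ρ/2). Then |(F^k)'(z)| > 1, i.e. z is a repelling periodic point of F. -/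
open Metric Set Filter Topology

/-!
Since `F^[k] ∘ G = id` near the fixed point `z`, the chain rule gives
`(F^[k])'(z) · G'(z) = 1`. The iterate `G^[n]` fixes `z` and maps `B(z, ρ)` into the smaller
ball `B(z, ρ/2)`, so the Schwarz lemma yields `|G'(z)|ⁿ = |(G^[n])'(z)| ≤ 1/2`, whence
`|G'(z)| < 1` and `|(F^[k])'(z)| > 1`.
-/

theorem differentiableAt_iterate_of_orbit {𝕜 E : Type*} [NontriviallyNormedField 𝕜]
    [NormedAddCommGroup E] [NormedSpace 𝕜 E] {f : E → E} {x : E} :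
    ∀ {k : ℕ}, (∀ j < k, DifferentiableAt 𝕜 f (f^[j] x)) → DifferentiableAt 𝕜 f^[k] x
  | 0, _ => differentiableAt_id
  | k + 1, hf => by
    rw [Function.iterate_succ']
    exact (hf k k.lt_succ_self).comp x
      (differentiableAt_iterate_of_orbit fun j hj => hf j (hj.trans k.lt_succ_self))

theorem deriv_mul_deriv_eq_one_of_comp_eventuallyEq_id {𝕜 : Type*} [NontriviallyNormedField 𝕜]
    {f g : 𝕜 → 𝕜} {z : 𝕜} (hf : DifferentiableAt 𝕜 f (g z)) (hg : DifferentiableAt 𝕜 g z)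
    (hfg : f ∘ g =ᶠ[𝓝 z] id) : deriv f (g z) * deriv g z = 1 := by
  rw [← deriv_comp z hf hg, hfg.deriv_eq, deriv_id]

theorem Complex.norm_deriv_lt_one_of_iterate_mapsTo_closedBall {G : ℂ → ℂ} {z : ℂ} {ρ r : ℝ}
    {n : ℕ} (hρ : 0 < ρ) (hr : r < ρ) (hG : DifferentiableOn ℂ G (ball z ρ)) (hGz : G z = z)
    (hmaps : MapsTo G (ball z ρ) (ball z ρ)) (hGn : MapsTo G^[n] (ball z ρ) (closedBall z r)) :
    ‖deriv G z‖ < 1 := by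
  have hGderiv : HasDerivAt G (deriv G z) z :=
    (hG.differentiableAt (isOpen_ball.mem_nhds (mem_ball_self hρ))).hasDerivAt
  have hschwarz : ‖deriv G z‖ ^ n ≤ r / ρ := by
    rw [← norm_pow, ← (HasDerivAt.iterate z hGderiv hGz n).deriv]
    exact norm_deriv_le_div_of_mapsTo_ball (hG.iterate hmaps n)
      (by rwa [Function.iterate_fixed hGz]) hρ
  by_contra! h
  linarith [one_le_pow₀ (n := n) h, (div_lt_one hρ).2 hr]

theorem stmt_10_general (F G : ℂ → ℂ) (z : ℂ) (k n : ℕ)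
    (ρ : ℝ) (hρ : 0 < ρ)
    (hFanal : ∀ j < k, AnalyticAt ℂ F (F^[j] z))
    (hGdiff : DifferentiableOn ℂ G (ball z ρ))
    (hGz : G z = z)
    (hbranch : ∀ w ∈ ball z ρ, F^[k] (G w) = w)
    (hGmaps : Set.MapsTo G (ball z ρ) (ball z ρ))
    (hGn : Set.MapsTo (G^[n]) (ball z ρ) (ball z (ρ / 2))) :
    1 < ‖deriv (F^[k]) z‖ := by
  have hball : ball z ρ ∈ 𝓝 z := isOpen_ball.mem_nhds (mem_ball_self hρ)
  have hFk : DifferentiableAt ℂ F^[k] (G z) := by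
    rw [hGz]
    exact differentiableAt_iterate_of_orbit fun j hj => (hFanal j hj).differentiableAt
  have hchain : deriv F^[k] z * deriv G z = 1 := by
    simpa only [hGz] using deriv_mul_deriv_eq_one_of_comp_eventuallyEq_id hFk
      (hGdiff.differentiableAt hball) (eventually_of_mem hball hbranch)
  have hcontract : ‖deriv G z‖ < 1 :=
    Complex.norm_deriv_lt_one_of_iterate_mapsTo_closedBall hρ (by linarith) hGdiff hGz hGmaps
      (hGn.mono_right ball_subset_closedBall)
  have hnorm : ‖deriv F^[k] z‖ * ‖deriv G z‖ = 1 := by rw [← norm_mul, hchain, norm_one]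
  by_contra! hle
  linarith [mul_le_of_le_one_left (norm_nonneg (deriv G z)) hle]

/-- Schwarz-lemma argument of Corollary 7.2: a contracting inverse branch forces the
periodic point to be repelling. -/
theorem stmt_10 (F G : ℂ → ℂ) (z : ℂ) (k n : ℕ) (hk : 1 ≤ k) (hn : 1 ≤ n)
    (ρ : ℝ) (hρ : 0 < ρ)
    (hFanal : ∀ j < k, AnalyticAt ℂ F (F^[j] z))
    (hfix : F^[k] z = z)
    (hGdiff : DifferentiableOn ℂ G (ball z ρ))
    (hGz : G z = z)
    (hbranch : ∀ w ∈ ball z ρ, F^[k] (G w) = w)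
    (hGmaps : Set.MapsTo G (ball z ρ) (ball z ρ))
    (hGn : Set.MapsTo (G^[n]) (ball z ρ) (ball z (ρ / 2))) :
    1 < ‖deriv (F^[k]) z‖ :=
  stmt_10_general F G z k n ρ hρ hFanal hGdiff hGz hbranch hGmaps hGn
end

section
/- Let Ω ⊂ ℂ be a domain, z₀ ∈ Ω, and H : ℝ₊ → ℝ₊ an integrable function (∫₀^∞ H(r) dr < ∞) such that dist(z, ∂Ω) ≤ H(dist_qh(z, z₀)) for all z ∈ Ω, where dist_qh is the quasihyperbolic metric of Ω. Then every minimal quasihyperbolic geodesic γ in Ω starting at z₀ has Euclidean arclength at most ∫₀^∞ H(r) dr. -/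
open Metric MeasureTheory intervalIntegral

/-- Quasihyperbolic distance in a domain `Ω ⊂ ℂ`: infimum of `∫ |dζ|/dist(ζ,∂Ω)` over
differentiable curves in `Ω` joining the two points. -/
noncomputable def qhDist (Ω : Set ℂ) (x y : ℂ) : ℝ :=
  sInf { L : ℝ | ∃ γ : ℝ → ℂ, γ 0 = x ∧ γ 1 = y ∧ (∀ t ∈ Set.Icc (0 : ℝ) 1, γ t ∈ Ω) ∧
    DifferentiableOn ℝ γ (Set.Icc 0 1) ∧
    L = ∫ t in (0 : ℝ)..1, ‖derivWithin γ (Set.Icc 0 1) t‖ / infDist (γ t) Ωᶜ }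

/-!
Along the geodesic `γ`, parameterized by arclength, the function
`g(t) = dist_qh(z₀, γ(t)) = ∫₀ᵗ du / dist(γ(u), ∂Ω)` has derivative `g' = 1 / dist(γ, ∂Ω)`,
and the hypothesis on `H` says exactly that `1 ≤ g'(t) · H(g(t))`. Integrating over `[0, s]` and
substituting `r = g(t)` (legitimate since `g' > 0` makes `g` injective) gives
`s ≤ ∫ H(g(t)) g'(t) dt ≤ ∫₀^∞ H(r) dr`.
-/

open Set

theorem sub_le_setIntegral_of_one_le_deriv_mul_comp {g g' H : ℝ → ℝ} {a b : ℝ} {S : Set ℝ}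
    (hS : MeasurableSet S) (hH0 : ∀ r ∈ S, 0 ≤ H r) (hH : IntegrableOn H S)
    (hg : ∀ t ∈ Ioo a b, HasDerivAt g (g' t) t) (hgS : MapsTo g (Ioo a b) S)
    (hone : ∀ t ∈ Ioo a b, 1 ≤ g' t * H (g t)) :
    b - a ≤ ∫ r in S, H r := by
  have hg'pos : ∀ t ∈ Ioo a b, 0 < g' t := fun t ht =>
    pos_of_mul_pos_left (one_pos.trans_le (hone t ht)) (hH0 _ (hgS ht))
  have hgderiv : ∀ t ∈ Ioo a b, HasDerivWithinAt g (g' t) (Ioo a b) t := fun t ht =>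
    (hg t ht).hasDerivWithinAt
  have hginj : InjOn g (Ioo a b) := by
    refine (strictMonoOn_of_hasDerivWithinAt_pos (f' := g') (convex_Ioo a b) ?_ ?_ ?_).injOn
    · exact fun t ht => (hg t ht).continuousAt.continuousWithinAt
    all_goals rw [interior_Ioo]
    exacts [hgderiv, hg'pos]
  have habs : ∀ t ∈ Ioo a b, |g' t| • H (g t) = g' t * H (g t) := fun t ht => by
    rw [abs_of_pos (hg'pos t ht), smul_eq_mul]
  have hcomp : IntegrableOn (fun t => g' t * H (g t)) (Ioo a b) :=
    ((integrableOn_image_iff_integrableOn_abs_deriv_smul measurableSet_Ioo hgderiv hginj H).mp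
      (hH.mono_set hgS.image_subset)).congr_fun habs measurableSet_Ioo
  calc b - a ≤ volume.real (Ioo a b) := by rw [Real.volume_real_Ioo]; exact le_max_left _ _
    _ = ∫ _ in Ioo a b, (1 : ℝ) := by simp
    _ ≤ ∫ t in Ioo a b, g' t * H (g t) :=
        setIntegral_mono_on (integrableOn_const (by simp)) hcomp measurableSet_Ioo hone
    _ = ∫ r in g '' Ioo a b, H r := by
        rw [integral_image_eq_integral_abs_deriv_smul measurableSet_Ioo hgderiv hginj H]
        exact (setIntegral_congr_fun measurableSet_Ioo habs).symm
    _ ≤ ∫ r in S, H r :=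
        setIntegral_mono_set hH ((ae_restrict_iff' hS).mpr (ae_of_all _ hH0))
          (Filter.Eventually.of_forall hgS.image_subset)

theorem ContinuousOn.hasDerivAt_integral_of_mem_Ioo {E : Type*} [NormedAddCommGroup E]
    [NormedSpace ℝ E] [CompleteSpace E] {f : ℝ → E} {a b t : ℝ} (hf : ContinuousOn f (Icc a b)) (ht : t ∈ Ioo a b) :
    HasDerivAt (fun x => ∫ u in a..x, f u) (f t) t :=
  integral_hasDerivAt_right
    ((hf.mono (uIcc_of_le ht.1.le ▸ Icc_subset_Icc_right ht.2.le)).intervalIntegrable)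
    ((hf.mono Ioo_subset_Icc_self).stronglyMeasurableAtFilter isOpen_Ioo t ht)
    (hf.continuousAt (Icc_mem_nhds ht.1 ht.2))

theorem stmt_12_general (Ω : Set ℂ) (hΩ : IsOpen Ω) (hΩc : Ωᶜ.Nonempty)
    (z₀ : ℂ)
    (H : ℝ → ℝ) (hH0 : ∀ r, 0 ≤ H r) (hHint : IntegrableOn H (Set.Ioi (0 : ℝ)))
    (hdom : ∀ z ∈ Ω, infDist z Ωᶜ ≤ H (qhDist Ω z₀ z))
    (s : ℝ) (γ : ℝ → ℂ)
    (hγΩ : ∀ t ∈ Set.Icc 0 s, γ t ∈ Ω)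
    (hunit : ∀ t ∈ Set.Icc 0 s, ∃ v : ℂ, ‖v‖ = 1 ∧ HasDerivAt γ v t)
    (hmin : ∀ t ∈ Set.Icc 0 s,
      qhDist Ω z₀ (γ t) = ∫ u in (0 : ℝ)..t, (infDist (γ u) Ωᶜ)⁻¹) :
    s ≤ ∫ r in Set.Ioi (0 : ℝ), H r := by
  set d : ℝ → ℝ := fun t => infDist (γ t) Ωᶜ
  have hd : ∀ t ∈ Icc 0 s, 0 < d t := fun t ht =>
    (hΩ.isClosed_compl.notMem_iff_infDist_pos hΩc).mp (not_not_intro (hγΩ t ht))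
  have hdinv : ContinuousOn (fun t => (d t)⁻¹) (Icc 0 s) := fun t ht =>
    have ⟨_, _, hv⟩ := hunit t ht
    (((continuous_infDist_pt _).continuousAt.comp hv.continuousAt).inv₀ (hd t ht).ne')
      |>.continuousWithinAt
  rw [← sub_zero s]
  refine sub_le_setIntegral_of_one_le_deriv_mul_comp measurableSet_Ioi (fun r _ => hH0 r) hHint
    (fun t ht => hdinv.hasDerivAt_integral_of_mem_Ioo ht) (fun t ht => ?_) (fun t ht => ?_)
  · exact intervalIntegral_pos_of_pos_on
      ((hdinv.mono (Icc_subset_Icc_right ht.2.le)).intervalIntegrable_of_Icc ht.1.le)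
      (fun u hu => inv_pos.mpr (hd u ⟨hu.1.le, hu.2.le.trans ht.2.le⟩)) ht.1
  · have ht' := Ioo_subset_Icc_self ht
    calc (1 : ℝ) = (d t)⁻¹ * d t := (inv_mul_cancel₀ (hd t ht').ne').symm
      _ ≤ (d t)⁻¹ * H (∫ u in (0 : ℝ)..t, (d u)⁻¹) := by
        rw [← hmin t ht']
        exact mul_le_mul_of_nonneg_left (hdom _ (hγΩ t ht')) (inv_pos.mpr (hd t ht')).le

/-- Lemma 11.3: an integrable domain is geodesically bounded — every minimal
quasihyperbolic geodesic starting at the base point has Euclidean arclength at most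
`∫₀^∞ H(r) dr`. -/
theorem stmt_12 (Ω : Set ℂ) (hΩ : IsOpen Ω) (hΩc : Ωᶜ.Nonempty) (hconn : IsConnected Ω)
    (z₀ : ℂ) (hz₀ : z₀ ∈ Ω)
    (H : ℝ → ℝ) (hH0 : ∀ r, 0 ≤ H r) (hHint : IntegrableOn H (Set.Ioi (0 : ℝ)))
    (hdom : ∀ z ∈ Ω, infDist z Ωᶜ ≤ H (qhDist Ω z₀ z))
    (s : ℝ) (hs : 0 ≤ s) (γ : ℝ → ℂ) (hγ0 : γ 0 = z₀)
    (hγΩ : ∀ t ∈ Set.Icc 0 s, γ t ∈ Ω)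
    (hunit : ∀ t ∈ Set.Icc 0 s, ∃ v : ℂ, ‖v‖ = 1 ∧ HasDerivAt γ v t)
    (hmin : ∀ t ∈ Set.Icc 0 s,
      qhDist Ω z₀ (γ t) = ∫ u in (0 : ℝ)..t, (infDist (γ u) Ωᶜ)⁻¹) :
    s ≤ ∫ r in Set.Ioi (0 : ℝ), H r :=
  stmt_12_general Ω hΩ hΩc z₀ H hH0 hHint hdom s γ hγΩ hunit hmin
end

section
/- Let Ω ⊂ ℂ be an integrable domain with base point z₀ and integrable bound H. Define A : ℝ₊ → ℝ₊ as the inverse function of r ↦ ∫_r^∞ H(u) du (assumed continuous, strictly decreasing, tending to 0). Then for every minimal quasihyperbolic geodesic γ from z₀ to z ∈ Ω, and every point z₁ on γ, the Euclidean length of the subarc γ(z₁, z) of γ from z₁ to z satisfies length(γ(z₁,z)) ≤ ∫_{dist_qh(z₀,z₁)}^∞ H(r) dr; equivalently dist_qh(z₀, z₁) ≤ A(length(γ(z₁,z))). -/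
open Metric MeasureTheory intervalIntegral

/-!
Write `g(t) = dist_qh(z₀, γ t) = ∫₀ᵗ du / d(γ u)`, where `d = dist(·, ∂Ω)`. The hypothesis on `Ω`
says `d(γ t) ≤ H(g t)`, i.e. `g'(t) H(g(t)) ≥ 1`. Integrating this over `[t₁, s]` and changing
variables `r = g(t)` gives `s - t₁ ≤ ∫_{g t₁}^{g s} H ≤ ∫_{g t₁}^∞ H`.
-/

open Set

theorem hasDerivAt_integral_of_continuousOn {E : Type*} [NormedAddCommGroup E]
    [NormedSpace ℝ E] [CompleteSpace E] {f : ℝ → E} {a b x : ℝ}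
    (hf : ContinuousOn f (Icc a b)) (hx : x ∈ Ioo a b) :
    HasDerivAt (fun t => ∫ u in a..t, f u) (f x) x :=
  integral_hasDerivAt_right
    ((hf.mono (Icc_subset_Icc_right hx.2.le)).intervalIntegrable_of_Icc hx.1.le)
    ((hf.mono Ioo_subset_Icc_self).stronglyMeasurableAtFilter isOpen_Ioo x hx)
    (hf.continuousAt (Icc_mem_nhds hx.1 hx.2))

theorem strictMonoOn_integral_of_pos {f : ℝ → ℝ} {a b : ℝ} (hf : IntervalIntegrable f volume a b)
    (hpos : ∀ x ∈ Ioo a b, 0 < f x) : StrictMonoOn (fun t => ∫ u in a..t, f u) (Icc a b) := by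
  intro x hx y hy hxy
  have hint : ∀ {c d}, c ∈ Icc a b → d ∈ Icc a b → IntervalIntegrable f volume c d :=
    fun hc hd => hf.mono_set (uIcc_subset_uIcc (Icc_subset_uIcc hc) (Icc_subset_uIcc hd))
  have ha : a ∈ Icc a b := left_mem_Icc.2 (hx.1.trans hx.2)
  rw [← sub_pos, integral_interval_sub_left (hint ha hy) (hint ha hx)]
  exact intervalIntegral_pos_of_pos_on (hint hx hy)
    (fun u hu => hpos u ⟨hx.1.trans_lt hu.1, hu.2.trans_le hy.2⟩) hxy

theorem sub_le_setIntegral_Ioi_of_one_le_deriv_mul_comp {G G' H : ℝ → ℝ} {a b : ℝ}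
    (hG' : ∀ x ∈ Ioo a b, HasDerivAt G (G' x) x) (hG : StrictMonoOn G (Icc a b))
    (hH0 : ∀ r, 0 ≤ H r) (hH : IntegrableOn H (Ioi (G a)))
    (hone : ∀ x ∈ Ioo a b, 1 ≤ G' x * H (G x)) :
    b - a ≤ ∫ r in Ioi (G a), H r := by
  have hG'within : ∀ x ∈ Ioo a b, HasDerivWithinAt G (G' x) (Ioo a b) x :=
    fun x hx => (hG' x hx).hasDerivWithinAt
  have hinj : InjOn G (Ioo a b) := hG.injOn.mono Ioo_subset_Icc_self
  have himage : G '' Ioo a b ⊆ Ioi (G a) := by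
    rintro _ ⟨x, hx, rfl⟩
    exact hG (left_mem_Icc.2 (hx.1.trans hx.2).le) (Ioo_subset_Icc_self hx) hx.1
  have hone_abs : ∀ x ∈ Ioo a b, 1 ≤ |G' x| • H (G x) := fun x hx =>
    (hone x hx).trans (mul_le_mul_of_nonneg_right (le_abs_self _) (hH0 _))
  have hint : IntegrableOn (fun x => |G' x| • H (G x)) (Ioo a b) :=
    (integrableOn_image_iff_integrableOn_abs_deriv_smul measurableSet_Ioo hG'within hinj H).1
      (hH.mono_set himage)
  calc b - a ≤ 1 * volume.real (Ioo a b) := by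
        rw [one_mul, Real.volume_real_Ioo]; exact le_max_left _ _
    _ ≤ ∫ x in Ioo a b, |G' x| • H (G x) :=
        setIntegral_ge_of_const_le_real measurableSet_Ioo (by simp) hone_abs hint
    _ = ∫ r in G '' Ioo a b, H r :=
        (integral_image_eq_integral_abs_deriv_smul measurableSet_Ioo hG'within hinj H).symm
    _ ≤ ∫ r in Ioi (G a), H r :=
        setIntegral_mono_set hH (ae_of_all _ hH0) himage.eventuallyLE

theorem stmt_13_general (Ω : Set ℂ) (hΩ : IsOpen Ω) (hΩc : Ωᶜ.Nonempty)
    (z₀ : ℂ)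
    (H : ℝ → ℝ) (hH0 : ∀ r, 0 ≤ H r) (hHint : IntegrableOn H (Set.Ioi (0 : ℝ)))
    (hdom : ∀ z ∈ Ω, infDist z Ωᶜ ≤ H (qhDist Ω z₀ z))
    (s : ℝ) (γ : ℝ → ℂ)
    (hγΩ : ∀ t ∈ Set.Icc 0 s, γ t ∈ Ω)
    (hunit : ∀ t ∈ Set.Icc 0 s, ∃ v : ℂ, ‖v‖ = 1 ∧ HasDerivAt γ v t)
    (hmin : ∀ t ∈ Set.Icc 0 s,
      qhDist Ω z₀ (γ t) = ∫ u in (0 : ℝ)..t, (infDist (γ u) Ωᶜ)⁻¹) :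
    ∀ t₁ ∈ Set.Icc 0 s, s - t₁ ≤ ∫ r in Set.Ioi (qhDist Ω z₀ (γ t₁)), H r := by
  intro t₁ ht₁
  have hd : ∀ t ∈ Icc 0 s, 0 < infDist (γ t) Ωᶜ := fun t ht =>
    (hΩ.isClosed_compl.notMem_iff_infDist_pos hΩc).1 (not_not.2 (hγΩ t ht))
  have hγ : ContinuousOn γ (Icc 0 s) := fun t ht =>
    (hunit t ht).choose_spec.2.continuousAt.continuousWithinAt
  have hf : ContinuousOn (fun u => (infDist (γ u) Ωᶜ)⁻¹) (Icc 0 s) :=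
    ((continuous_infDist_pt _).comp_continuousOn hγ).inv₀ fun t ht => (hd t ht).ne'
  have hGmono := strictMonoOn_integral_of_pos (hf.intervalIntegrable_of_Icc (ht₁.1.trans ht₁.2))
    fun t ht => inv_pos.2 (hd t (Ioo_subset_Icc_self ht))
  have hIcc : Icc t₁ s ⊆ Icc 0 s := Icc_subset_Icc_left ht₁.1
  have hg_nonneg : 0 ≤ ∫ u in (0 : ℝ)..t₁, (infDist (γ u) Ωᶜ)⁻¹ :=
    integral_nonneg ht₁.1 fun u _ => inv_nonneg.2 infDist_nonneg
  rw [hmin t₁ ht₁]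
  refine sub_le_setIntegral_Ioi_of_one_le_deriv_mul_comp
    (fun x hx => hasDerivAt_integral_of_continuousOn hf ⟨ht₁.1.trans_lt hx.1, hx.2⟩)
    (hGmono.mono hIcc) hH0 (hHint.mono_set (Ioi_subset_Ioi hg_nonneg)) fun x hx => ?_
  have hx : x ∈ Icc 0 s := hIcc (Ioo_subset_Icc_self hx)
  rw [one_le_inv_mul₀ (hd x hx), ← hmin x hx]
  exact hdom _ (hγΩ x hx)

/-- Lemma 11.4: along a minimal quasihyperbolic geodesic from the base point `z₀` to `z`,
the Euclidean length of the terminal subarc past `z₁ = γ t₁` is at most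
`∫_{dist_qh(z₀,z₁)}^∞ H(r) dr`. -/
theorem stmt_13 (Ω : Set ℂ) (hΩ : IsOpen Ω) (hΩc : Ωᶜ.Nonempty) (hconn : IsConnected Ω)
    (z₀ : ℂ) (hz₀ : z₀ ∈ Ω)
    (H : ℝ → ℝ) (hH0 : ∀ r, 0 ≤ H r) (hHint : IntegrableOn H (Set.Ioi (0 : ℝ)))
    (hdom : ∀ z ∈ Ω, infDist z Ωᶜ ≤ H (qhDist Ω z₀ z))
    (s : ℝ) (hs : 0 ≤ s) (γ : ℝ → ℂ) (hγ0 : γ 0 = z₀)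
    (hγΩ : ∀ t ∈ Set.Icc 0 s, γ t ∈ Ω)
    (hunit : ∀ t ∈ Set.Icc 0 s, ∃ v : ℂ, ‖v‖ = 1 ∧ HasDerivAt γ v t)
    (hmin : ∀ t ∈ Set.Icc 0 s,
      qhDist Ω z₀ (γ t) = ∫ u in (0 : ℝ)..t, (infDist (γ u) Ωᶜ)⁻¹) :
    ∀ t₁ ∈ Set.Icc 0 s, s - t₁ ≤ ∫ r in Set.Ioi (qhDist Ω z₀ (γ t₁)), H r :=
  stmt_13_general Ω hΩ hΩc z₀ H hH0 hHint hdom s γ hγΩ hunit hmin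
end
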